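/- arXiv:math/0606034 — 3 statements merged into one kernel-verified Lean document; each statement's English description precedes it below -/
import Mathlib

section
/- Let A be an abelian group. Define the homomorphism d from the direct sum ⨁_{g ∈ ℤ} A (finitely supported families (a_g)_{g∈ℤ} of elements of A) to the direct product ∏_{s ∈ ℕ} A whose s-th component is d_s((a_g)) = Σ_{g ∈ ℤ} C(g+s−1, s) · a_g (a finite sum, where the integer C(g+s−1, s) acts on A by ℤ-scalar multiplication). Then d is injective. -/
private lemma key_choose (n s : ℕ) : Ring.choose ((s:ℤ) - n - 1) s = (-1)^s * n.choose s := by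
  induction n generalizing s with
  | zero =>
    cases s with
    | zero => simp [Ring.choose_zero_right]
    | succ s =>
      have h : ((s+1:ℕ):ℤ) - (0:ℕ) - 1 = ((s:ℕ):ℤ) := by push_cast; ring
      rw [h, Ring.choose_natCast]
      simp [Nat.choose_eq_zero_of_lt]
  | succ n ih =>
    cases s with
    | zero => simp [Ring.choose_zero_right]
    | succ s =>
      have hp := Ring.choose_succ_succ ((s:ℤ) - n - 1) s
      have h1 : ((s:ℤ) - n - 1) + 1 = ((s+1:ℕ):ℤ) - n - 1 := by push_cast; ring
      have h2 : ((s+1:ℕ):ℤ) - ((n+1:ℕ):ℤ) - 1 = (s:ℤ) - n - 1 := by push_cast; ring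
      rw [h1] at hp
      rw [h2]
      have e1 := ih (s+1)
      have e2 := ih s
      have : Ring.choose ((s:ℤ) - n - 1) (s+1)
          = (-1)^(s+1) * n.choose (s+1) - (-1)^s * n.choose s := by
        rw [← e1, ← e2]; linarith [hp]
      rw [this, Nat.choose_succ_succ]
      push_cast
      ring

/-- coefficient for nonpositive `g`. -/
private lemma key_choose' (g : ℤ) (hg : g ≤ 0) (s : ℕ) :
    Ring.choose (g + (s:ℤ) - 1) s = (-1)^s * ((-g).toNat.choose s) := by
  have h : g + (s:ℤ) - 1 = (s:ℤ) - ((-g).toNat : ℕ) - 1 := by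
    have : (((-g).toNat : ℕ) : ℤ) = -g := Int.toNat_of_nonneg (by omega)
    omega
  rw [h, key_choose]

/-- the kernel lemma in the nonpositive-support case. -/
private lemma kern_nonpos (A : Type*) [AddCommGroup A] (a : ℤ →₀ A)
    (hsupp : ∀ g ∈ a.support, g ≤ 0)
    (h : ∀ s : ℕ, a.sum (fun g ag => Ring.choose (g + (s:ℤ) - 1) s • ag) = 0) :
    a = 0 := by
  set K : ℕ := a.support.sup fun g => (-g).toNat with hK
  have hbd : ∀ g ∈ a.support, (-g).toNat ≤ K := fun g hg =>
    Finset.le_sup (f := fun g => (-g).toNat) hg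
  have main : ∀ j : ℕ, ∀ n : ℕ, K < n + j → a (-(n:ℤ)) = 0 := by
    intro j
    induction j with
    | zero =>
      intro n hn
      by_contra hne
      have hmem : (-(n:ℤ)) ∈ a.support := Finsupp.mem_support_iff.mpr hne
      have := hbd _ hmem
      simp at this; omega
    | succ j ih =>
      intro n hn
      rcases lt_or_ge K (n + j) with hlt | hge
      · exact ih n hlt
      have hnj : n + j = K := by omega
      by_cases hmem : (-(n:ℤ)) ∈ a.support
      case neg => exact Finsupp.notMem_support_iff.mp hmem
      -- use the equation at s = n
      have heq := h n
      rw [Finsupp.sum] at heq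
      have hsingle : ∀ g ∈ a.support, g ≠ (-(n:ℤ)) →
          Ring.choose (g + (n:ℤ) - 1) n • a g = 0 := by
        intro g hg hne
        have hg0 := hsupp g hg
        rw [key_choose' g hg0]
        set m : ℕ := (-g).toNat with hm
        rcases lt_or_ge m n with hlt | hge2
        · rw [Nat.choose_eq_zero_of_lt hlt]; simp
        · have hmn : m ≠ n := by
            intro hc
            apply hne
            have : ((m : ℕ) : ℤ) = -g := Int.toNat_of_nonneg (by omega)
            omega
          have : K < m + j := by omega
          have hz : a (-(m:ℤ)) = 0 := ih m this
          have hgm : g = -(m:ℤ) := by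
            have : ((m : ℕ) : ℤ) = -g := Int.toNat_of_nonneg (by omega)
            omega
          rw [hgm, hz, smul_zero]
      have hsum : (a.support.sum fun g => Ring.choose (g + (n:ℤ) - 1) n • a g)
          = Ring.choose ((-(n:ℤ)) + (n:ℤ) - 1) n • a (-(n:ℤ)) :=
        Finset.sum_eq_single _ hsingle (fun hx => absurd hmem hx)
      rw [hsum] at heq
      rw [key_choose' _ (by omega)] at heq
      have hc : ((-(-(n:ℤ))).toNat.choose n : ℤ) = 1 := by
        simp [Int.toNat_natCast]
      rw [hc, mul_one] at heq
      have := congrArg (fun x => ((-1:ℤ)^n) • x) heq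
      simpa [smul_smul, ← pow_add, ← two_mul, pow_mul] using this
  ext g
  rcases le_or_gt g 0 with hg | hg
  · have : a (-(((-g).toNat : ℕ) : ℤ)) = 0 := main ((-g).toNat + K + 1) _ (by omega)
    have hgeq : (((-g).toNat : ℕ) : ℤ) = -g := Int.toNat_of_nonneg (by omega)
    rw [hgeq, neg_neg] at this
    simpa using this
  · by_contra hne
    have := hsupp g (Finsupp.mem_support_iff.mpr (by simpa using hne))
    omega

private lemma kern (A : Type*) [AddCommGroup A] (a : ℤ →₀ A)
    (h : ∀ s : ℕ, a.sum (fun g ag => Ring.choose (g + (s:ℤ) - 1) s • ag) = 0) :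
    a = 0 := by
  -- shift preserves the hypothesis
  have hshift : ∀ (b : ℤ →₀ A),
      (∀ s : ℕ, b.sum (fun g ag => Ring.choose (g + (s:ℤ) - 1) s • ag) = 0) →
      ∀ s : ℕ, (Finsupp.mapDomain (fun g => g - 1) b).sum
        (fun g ag => Ring.choose (g + (s:ℤ) - 1) s • ag) = 0 := by
    intro b hb s
    rw [Finsupp.sum_mapDomain_index (fun g => smul_zero _)
      (fun g x y => smul_add _ x y)]
    cases s with
    | zero =>
      have := hb 0
      simpa using this
    | succ s =>
      have hc : ∀ g : ℤ, Ring.choose ((g - 1) + ((s+1:ℕ):ℤ) - 1) (s+1)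
          = Ring.choose (g + ((s+1:ℕ):ℤ) - 1) (s+1) - Ring.choose (g + (s:ℤ) - 1) s := by
        intro g
        have hp := Ring.choose_succ_succ (g + (s:ℤ) - 1) s
        have h1 : g + (s:ℤ) - 1 + 1 = g + ((s+1:ℕ):ℤ) - 1 := by push_cast; ring
        have h2 : (g - 1) + ((s+1:ℕ):ℤ) - 1 = g + (s:ℤ) - 1 := by push_cast; ring
        rw [h1] at hp
        rw [h2]
        linarith
      have hsplit : b.sum (fun g ag => Ring.choose (g + ((s+1:ℕ):ℤ) - 1) (s+1) • ag
            - Ring.choose (g + (s:ℤ) - 1) s • ag)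
          = b.sum (fun g ag => Ring.choose (g + ((s+1:ℕ):ℤ) - 1) (s+1) • ag)
            - b.sum (fun g ag => Ring.choose (g + (s:ℤ) - 1) s • ag) := by
        rw [Finsupp.sum, Finsupp.sum, Finsupp.sum, Finset.sum_sub_distrib]
      calc b.sum (fun g ag => Ring.choose ((g - 1) + ((s+1:ℕ):ℤ) - 1) (s+1) • ag)
          = b.sum (fun g ag => Ring.choose (g + ((s+1:ℕ):ℤ) - 1) (s+1) • ag
              - Ring.choose (g + (s:ℤ) - 1) s • ag) := by
            apply Finsupp.sum_congr
            intro g _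
            rw [hc g, sub_smul]
        _ = 0 := by rw [hsplit, hb (s+1), hb s, sub_zero]
  -- iterate the shift to push the support into the nonpositive integers
  have hiter : ∀ k : ℕ,
      ∀ s : ℕ, (Finsupp.mapDomain (fun g => g - (k:ℤ)) a).sum
        (fun g ag => Ring.choose (g + (s:ℤ) - 1) s • ag) = 0 := by
    intro k
    induction k with
    | zero =>
      have : (Finsupp.mapDomain (fun g : ℤ => g - ((0:ℕ):ℤ)) a) = a := by
        have : (fun g : ℤ => g - ((0:ℕ):ℤ)) = id := by funext g; simp
        rw [this, Finsupp.mapDomain_id]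
      rw [this]; exact h
    | succ k ih =>
      have hcomp : (Finsupp.mapDomain (fun g : ℤ => g - ((k+1:ℕ):ℤ)) a)
          = Finsupp.mapDomain (fun g => g - 1)
              (Finsupp.mapDomain (fun g => g - ((k:ℕ):ℤ)) a) := by
        rw [← Finsupp.mapDomain_comp]
        congr 1
        funext g
        simp only [Function.comp_apply]
        push_cast; ring
      rw [hcomp]
      exact hshift _ ih
  set N : ℕ := a.support.sup fun g => g.toNat with hN
  have hb0 : (Finsupp.mapDomain (fun g : ℤ => g - (N:ℤ)) a) = 0 := by
    apply kern_nonpos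
    · intro g hg
      rw [Finsupp.mapDomain_support_of_injective
        (f := fun g : ℤ => g - (N:ℤ)) sub_left_injective a, Finset.mem_image] at hg
      obtain ⟨g', hg', rfl⟩ := hg
      have h1 : g'.toNat ≤ N := Finset.le_sup (f := fun g : ℤ => g.toNat) hg'
      have := Int.self_le_toNat g'
      omega
    · exact hiter N
  exact Finsupp.mapDomain_injective (f := fun g : ℤ => g - (N:ℤ)) sub_left_injective
    (hb0.trans Finsupp.mapDomain_zero.symm)

/-- **Lemma 2.23.** For any abelian group `A`, the homomorphism
`d = ∏ₛ dₛ : ⨁_{g ∈ ℤ} A → ∏_{s ∈ ℕ} A`, whose `s`-th component is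
`dₛ((a_g)) = Σ_g C(g+s-1, s) • a_g` (with the generalized binomial coefficient
`C(x, s) = x(x-1)⋯(x-s+1)/s! ∈ ℤ` acting by `ℤ`-scalar multiplication),
is injective. -/
theorem lemma_2_23 (A : Type*) [AddCommGroup A] :
    Function.Injective (fun (a : ℤ →₀ A) (s : ℕ) =>
      a.sum fun g ag => Ring.choose (g + (s : ℤ) - 1) s • ag) := by
  intro a b hab
  have hsub : ∀ s : ℕ, (a - b).sum (fun g ag => Ring.choose (g + (s:ℤ) - 1) s • ag) = 0 := by
    intro s
    rw [Finsupp.sum_sub_index (fun g _ => by intros; rw [smul_sub])]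
    have := congrFun hab s
    simp only at this
    rw [this, sub_self]
  have := kern A (a - b) hsub
  have : a - b = 0 := this
  exact sub_eq_zero.mp this
end

section
/- For every natural number n ≥ 0 and every integer n₀, the (n+1)×(n+1) integer matrix M(n, n₀) whose entry in row s (for s = 0, 1, …, n, rows in increasing order of s) and column indexed by g (for g = n₀−n, n₀−n+1, …, n₀, columns in increasing order of g) is the generalized binomial coefficient C(g+s−1, s) has determinant exactly 1. -/
/-!
Multiplying row `s` by `s!` turns `C(g + s - 1, s)` into the rising factorial `g (g+1) ⋯ (g+s-1)`,
a monic polynomial of degree `s` in `g`. A matrix of values of monic polynomials of degrees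
`0, …, n` at points `g` has the Vandermonde determinant of those points, which for the consecutive
points `n₀ - n, …, n₀` equals `0! 1! ⋯ n!`. That is exactly the factor introduced by the row
scaling, so the determinant is `1`.
-/

open Matrix Polynomial

theorem Ring.factorial_mul_choose_eq_ascPochhammer_eval {R : Type*} [CommRing R] [BinomialRing R]
    (r : R) (s : ℕ) :
    (s.factorial : R) * Ring.choose (r + s - 1) s = (ascPochhammer R s).eval r := by
  rw [← Ring.multichoose_eq, ← nsmul_eq_mul, Ring.factorial_nsmul_multichoose_eq_ascPochhammer,
    ascPochhammer_smeval_eq_eval]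

theorem Fin.prod_factorial_eq_superFactorial {R : Type*} [CommSemiring R] (n : ℕ) :
    ∏ i : Fin (n + 1), ((i : ℕ).factorial : R) = n.superFactorial := by
  rw [Fin.prod_univ_eq_prod_range (fun i => (i.factorial : R)), ← Nat.prod_range_succ_factorial]
  push_cast
  rfl

theorem Nat.superFactorial_ne_zero (n : ℕ) : n.superFactorial ≠ 0 := by
  rw [← Nat.prod_range_succ_factorial]
  exact Finset.prod_ne_zero_iff.mpr fun i _ => i.factorial_ne_zero

theorem Matrix.superFactorial_mul_det_choose {R : Type*} [CommRing R] [IsDomain R] [BinomialRing R]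
    {n : ℕ} (x : Fin (n + 1) → R) :
    (n.superFactorial : R) * det (of fun s j : Fin (n + 1) => Ring.choose (x j + s - 1) (s : ℕ)) =
      det (vandermonde x) := by
  rw [← Fin.prod_factorial_eq_superFactorial, ← det_mul_column,
    det_eval_matrixOfPolynomials_eq_det_vandermonde x (fun s => ascPochhammer R s)
      (fun s => ascPochhammer_natDegree R s) (fun s => monic_ascPochhammer R s),
    ← det_transpose]
  congr 1
  ext s j
  simp [Ring.factorial_mul_choose_eq_ascPochhammer_eval]

/-- The `(n+1) × (n+1)` integer matrix `M(n, n₀)` with entries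
`b_{s,g} = C(g+s-1, s)` (generalized binomial coefficient,
`C(x,s) = x(x-1)⋯(x-s+1)/s!`), where `0 ≤ s ≤ n` indexes the rows and
`g = n₀-n, …, n₀` indexes the columns (both in increasing order),
has determinant `1`. -/
theorem det_binomial_matrix (n : ℕ) (n₀ : ℤ) :
    Matrix.det (fun s j : Fin (n + 1) =>
      Ring.choose ((n₀ - (n : ℤ) + (j : ℤ)) + (s : ℤ) - 1) (s : ℕ)) = 1 := by
  have h_scaled := superFactorial_mul_det_choose fun j : Fin (n + 1) => n₀ - n + j
  rw [show (vandermonde fun j : Fin (n + 1) => n₀ - n + j) =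
      vandermonde fun j : Fin (n + 1) => (j : ℤ) + (n₀ - n) by simp only [add_comm],
    det_vandermonde_add, det_vandermonde_id_eq_superFactorial] at h_scaled
  exact (mul_eq_left₀ (by exact_mod_cast n.superFactorial_ne_zero)).mp h_scaled
end

section
/- Let A be an abelian group and let k ≥ 1 be a natural number. Define the homomorphism D from the direct sum ⨁_{(g) ∈ ℤ^k} A (finitely supported families (a_{(g)}) indexed by k-tuples of integers (g) = (g₁, …, g_k)) to the direct product ∏_{(s) ∈ ℕ^k} A whose component at (s) = (s₁, …, s_k) ∈ ℕ^k is Σ_{(g) ∈ ℤ^k} ( ∏_{j=1}^{k} C(g_j+s_j−1, s_j) ) · a_{(g)} (a finite sum, with the integer coefficient acting by ℤ-scalar multiplication). Then D is injective. -/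
open Finsupp

def phi (g : ℤ) (s : ℕ) : ℤ := Ring.choose (g + (s : ℤ) - 1) s

lemma phi_zero (g : ℤ) : phi g 0 = 1 := by
  simp [phi, Ring.choose_zero_right]

lemma phi_pascal (g : ℤ) (s : ℕ) : phi g (s + 1) = phi g s + phi (g - 1) (s + 1) := by
  have h := Ring.choose_succ_succ (g + (s : ℤ) - 1) s
  have e : g + ((s : ℤ) + 1) - 1 = (g + (s:ℤ) - 1) + 1 := by ring
  simp only [phi]
  push_cast
  rw [e, h]
  congr 2
  ring

lemma phi_one (s : ℕ) : phi 1 s = 1 := by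
  have : (1 : ℤ) + (s:ℤ) - 1 = ((s : ℕ) : ℤ) := by push_cast; ring
  rw [phi, this, Ring.choose_natCast]
  simp

lemma phi_zero_left (s : ℕ) (hs : 1 ≤ s) : phi 0 s = 0 := by
  obtain ⟨t, rfl⟩ := Nat.exists_eq_add_of_le hs
  have : (0 : ℤ) + ((1 + t : ℕ) : ℤ) - 1 = ((t : ℕ) : ℤ) := by push_cast; ring
  rw [phi, this, Ring.choose_natCast]
  rw [Nat.choose_eq_zero_of_lt (by omega)]
  simp

lemma phi_hockey (g : ℤ) (s : ℕ) :
    ∑ t ∈ Finset.range (s + 1), phi g t = phi (g + 1) s := by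
  induction s with
  | zero => simp [phi_zero]
  | succ n ih =>
    rw [Finset.sum_range_succ, ih]
    have := phi_pascal (g + 1) n
    simp only [add_sub_cancel_right] at this
    omega

noncomputable section

/-- linear combination functional -/
def Lc (v : ℕ → ℤ) (lam : ℕ →₀ ℤ) : ℤ := Finsupp.linearCombination ℤ v lam

lemma Lc_apply (v : ℕ → ℤ) (lam : ℕ →₀ ℤ) : Lc v lam = lam.sum fun s c => c * v s := by
  simp [Lc, Finsupp.linearCombination_apply, smul_eq_mul]

lemma key_pos (n : ℕ) : ∀ (S : Finset ℤ), (∀ g ∈ S, 1 ≤ g ∧ g ≤ (n : ℤ)) →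
    ∀ g₀ ∈ S, ∀ t₀ : ℕ, ∃ lam : ℕ →₀ ℤ,
      ∀ g ∈ S, Lc (fun s => phi g (s + t₀)) lam = if g = g₀ then 1 else 0 := by
  induction n with
  | zero =>
    intro S hS g₀ hg₀ t₀
    exact absurd (hS g₀ hg₀) (by omega)
  | succ n ih =>
    intro S hS
    have claimA : ∀ g₀ ∈ S, 2 ≤ g₀ → ∀ t₀ : ℕ, ∃ lam : ℕ →₀ ℤ,
        ∀ g ∈ S, Lc (fun s => phi g (s + t₀)) lam = if g = g₀ then 1 else 0 := by
      intro g₀ hg₀ hg₀2 t₀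
      set S' := (S.filter (fun g => 2 ≤ g)).image (fun g => g - 1) with hS'def
      have hS' : ∀ h ∈ S', 1 ≤ h ∧ h ≤ (n : ℤ) := by
        intro h hh
        simp only [hS'def, Finset.mem_image, Finset.mem_filter] at hh
        obtain ⟨g, ⟨hgS, hg2⟩, rfl⟩ := hh
        have := hS g hgS
        push_cast at this ⊢
        omega
      have hg₀' : g₀ - 1 ∈ S' := by
        simp only [hS'def, Finset.mem_image, Finset.mem_filter]
        exact ⟨g₀, ⟨hg₀, hg₀2⟩, rfl⟩
      obtain ⟨lam'', h''⟩ := ih S' hS' (g₀ - 1) hg₀' (t₀ + 1)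
      refine ⟨lam''.sum fun s c => Finsupp.single (s + 1) c - Finsupp.single s c, ?_⟩
      intro g hg
      have expand : ∀ v : ℕ → ℤ,
          Lc v (lam''.sum fun s c => Finsupp.single (s + 1) c - Finsupp.single s c)
            = lam''.sum fun s c => c * (v (s + 1) - v s) := by
        intro v
        rw [Lc, map_finsuppSum]
        refine Finsupp.sum_congr fun s hs => ?_
        rw [map_sub, Finsupp.linearCombination_single, Finsupp.linearCombination_single,
          smul_eq_mul, smul_eq_mul]
        ring
      rw [expand]
      have hdiff : ∀ s : ℕ, phi g (s + 1 + t₀) - phi g (s + t₀) = phi (g - 1) (s + (t₀ + 1)) := by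
        intro s
        have := phi_pascal g (s + t₀)
        have e1 : s + t₀ + 1 = s + 1 + t₀ := by omega
        have e2 : s + t₀ + 1 = s + (t₀ + 1) := by omega
        rw [e1] at this
        rw [← e2, e1]
        omega
      have : (lam''.sum fun s c => c * (phi g (s + 1 + t₀) - phi g (s + t₀)))
          = Lc (fun s => phi (g - 1) (s + (t₀ + 1))) lam'' := by
        rw [Lc_apply]
        exact Finsupp.sum_congr fun s _ => by rw [hdiff]
      rw [this]
      by_cases hg2 : 2 ≤ g
      · have hgS' : g - 1 ∈ S' := by
          simp only [hS'def, Finset.mem_image, Finset.mem_filter]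
          exact ⟨g, ⟨hg, hg2⟩, rfl⟩
        rw [h'' (g - 1) hgS']
        have : (g - 1 = g₀ - 1) ↔ (g = g₀) := by omega
        simp [this]
      · have hg1 : g = 1 := by have := hS g hg; omega
        subst hg1
        have : Lc (fun s => phi (1 - 1) (s + (t₀ + 1))) lam'' = 0 := by
          rw [Lc_apply]
          rw [Finsupp.sum]
          apply Finset.sum_eq_zero
          intro s _
          rw [show (1:ℤ) - 1 = 0 by ring, phi_zero_left _ (by omega), mul_zero]
        rw [this, if_neg (by omega)]
    intro g₀ hg₀ t₀
    by_cases hg₀2 : 2 ≤ g₀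
    · exact claimA g₀ hg₀ hg₀2 t₀
    · have hg₀1 : g₀ = 1 := by have := hS g₀ hg₀; omega
      set S₂ := S.filter (fun g => 2 ≤ g) with hS₂def
      have hA : ∀ h ∈ S₂, ∃ lam : ℕ →₀ ℤ,
          ∀ g ∈ S, Lc (fun s => phi g (s + t₀)) lam = if g = h then 1 else 0 := by
        intro h hh
        simp only [hS₂def, Finset.mem_filter] at hh
        exact claimA h hh.1 hh.2 t₀
      choose! F hF using hA
      refine ⟨Finsupp.single 0 1 - ∑ h ∈ S₂, phi h t₀ • F h, ?_⟩
      intro g hg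
      rw [Lc, map_sub, map_sum, Finsupp.linearCombination_single]
      have : ∀ h ∈ S₂, (Finsupp.linearCombination ℤ fun s => phi g (s + t₀)) (phi h t₀ • F h)
          = phi h t₀ * (if g = h then 1 else 0) := by
        intro h hh
        rw [map_smul, smul_eq_mul]
        congr 1
        exact hF h hh g hg
      rw [Finset.sum_congr rfl this]
      simp only [mul_ite, mul_one, mul_zero]
      rw [Finset.sum_ite_eq S₂ g (fun h => phi h t₀)]
      by_cases hgS₂ : g ∈ S₂
      · rw [if_pos hgS₂]
        have : ¬ (g = g₀) := by
          simp only [hS₂def, Finset.mem_filter] at hgS₂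
          omega
        simp [this]
      · rw [if_neg hgS₂]
        have hg1 : g = 1 := by
          have h1 := hS g hg
          have h2 : ¬ (2 ≤ g) := fun h2 => hgS₂ (Finset.mem_filter.mpr ⟨hg, h2⟩)
          omega
        subst hg1
        simp [phi_one, hg₀1]

end

noncomputable section

lemma key_shift (S : Finset ℤ) (c : ℤ) (r : ℤ → ℤ)
    (h : ∃ lam : ℕ →₀ ℤ, ∀ g ∈ S, Lc (fun s => phi (g + c + 1) s) lam = r g) :
    ∃ lam : ℕ →₀ ℤ, ∀ g ∈ S, Lc (fun s => phi (g + c) s) lam = r g := by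
  obtain ⟨lam, hlam⟩ := h
  refine ⟨lam.sum fun s cf => ∑ t ∈ Finset.range (s + 1), Finsupp.single t cf, ?_⟩
  intro g hg
  rw [Lc, map_finsuppSum]
  have : ∀ s ∈ lam.support,
      (Finsupp.linearCombination ℤ fun s => phi (g + c) s)
        (∑ t ∈ Finset.range (s + 1), Finsupp.single t (lam s))
      = lam s * phi (g + c + 1) s := by
    intro s _
    rw [map_sum]
    have : ∀ t ∈ Finset.range (s + 1),
        (Finsupp.linearCombination ℤ fun s => phi (g + c) s) (Finsupp.single t (lam s))
        = lam s * phi (g + c) t := by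
      intro t _
      rw [Finsupp.linearCombination_single, smul_eq_mul]
    rw [Finset.sum_congr rfl this, ← Finset.mul_sum, phi_hockey]
  unfold Finsupp.sum
  rw [Finset.sum_congr rfl this]
  have : (∑ s ∈ lam.support, lam s * phi (g + c + 1) s) = Lc (fun s => phi (g + c + 1) s) lam := by
    rw [Lc_apply]; rfl
  rw [this, hlam g hg]

lemma key_all (S : Finset ℤ) (g₀ : ℤ) (hg₀ : g₀ ∈ S) :
    ∃ lam : ℕ →₀ ℤ, ∀ g ∈ S,
      Lc (fun s => phi g s) lam = if g = g₀ then 1 else 0 := by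
  set m : ℕ := S.sup fun g => (1 - g).toNat with hm
  have hmg : ∀ g ∈ S, 1 ≤ g + (m : ℤ) := by
    intro g hg
    have h1 : (1 - g).toNat ≤ m := Finset.le_sup (f := fun g => (1 - g).toNat) hg
    omega
  -- positive result for shifted set
  have hbase : ∃ lam : ℕ →₀ ℤ, ∀ g ∈ S,
      Lc (fun s => phi (g + (m : ℤ)) s) lam = if g = g₀ then 1 else 0 := by
    set n : ℕ := (S.sup fun g => (g + (m : ℤ)).toNat) with hn
    have h := key_pos n (S.image fun g => g + (m : ℤ)) ?_ (g₀ + m)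
      (Finset.mem_image_of_mem _ hg₀) 0
    · obtain ⟨lam, hlam⟩ := h
      refine ⟨lam, fun g hg => ?_⟩
      have := hlam (g + m) (Finset.mem_image_of_mem _ hg)
      simp only [add_zero] at this ⊢
      rw [this]
      congr 1
      simp only [eq_iff_iff]
      omega
    · intro h hh
      simp only [Finset.mem_image] at hh
      obtain ⟨g, hg, rfl⟩ := hh
      have h1 := hmg g hg
      have h2 : (g + (m : ℤ)).toNat ≤ n := Finset.le_sup (f := fun g => (g + (m : ℤ)).toNat) hg
      omega
  -- shift down m times
  clear_value m
  clear hmg hm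
  induction m with
  | zero =>
    obtain ⟨lam, hlam⟩ := hbase
    refine ⟨lam, fun g hg => ?_⟩
    have := hlam g hg
    rwa [show g + ((0 : ℕ) : ℤ) = g by push_cast; ring] at this
  | succ p ih =>
    apply ih
    apply key_shift S (p : ℤ) (fun g => if g = g₀ then 1 else 0)
    obtain ⟨lam, hlam⟩ := hbase
    refine ⟨lam, fun g hg => ?_⟩
    have := hlam g hg
    rwa [show g + ((p + 1 : ℕ) : ℤ) = g + (p : ℤ) + 1 by push_cast; ring] at this

end

lemma core (A : Type*) [AddCommGroup A] (k : ℕ) (a : (Fin k → ℤ) →₀ A)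
    (h : ∀ s : Fin k → ℕ,
      (a.sum fun g ag => (∏ j : Fin k, phi (g j) (s j)) • ag) = 0) : a = 0 := by
  ext g₀
  choose lam hlam using fun j : Fin k =>
    key_all (insert (g₀ j) (a.support.image fun g => g j)) (g₀ j) (Finset.mem_insert_self _ _)
  set P := Fintype.piFinset (fun j : Fin k => (lam j).support) with hP
  have T0 : ∑ s ∈ P, (∏ j : Fin k, (lam j) (s j)) •
      (a.sum fun g ag => (∏ j : Fin k, phi (g j) (s j)) • ag) = 0 :=
    Finset.sum_eq_zero fun s _ => by rw [h s, smul_zero]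
  have expand : ∀ s : Fin k → ℕ,
      (a.sum fun g ag => (∏ j : Fin k, phi (g j) (s j)) • ag)
        = ∑ g ∈ a.support, (∏ j : Fin k, phi (g j) (s j)) • a g := fun s => rfl
  have T1 : ∑ s ∈ P, (∏ j : Fin k, (lam j) (s j)) •
      (a.sum fun g ag => (∏ j : Fin k, phi (g j) (s j)) • ag) = a g₀ := by
    calc ∑ s ∈ P, (∏ j : Fin k, (lam j) (s j)) •
        (a.sum fun g ag => (∏ j : Fin k, phi (g j) (s j)) • ag)
        = ∑ s ∈ P, ∑ g ∈ a.support,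
            ((∏ j : Fin k, (lam j) (s j)) * (∏ j : Fin k, phi (g j) (s j))) • a g := by
          refine Finset.sum_congr rfl fun s _ => ?_
          rw [expand s, Finset.smul_sum]
          exact Finset.sum_congr rfl fun g _ => by rw [smul_smul]
      _ = ∑ g ∈ a.support, ∑ s ∈ P,
            ((∏ j : Fin k, (lam j) (s j)) * (∏ j : Fin k, phi (g j) (s j))) • a g :=
          Finset.sum_comm
      _ = ∑ g ∈ a.support, (∑ s ∈ P,
            (∏ j : Fin k, (lam j) (s j)) * (∏ j : Fin k, phi (g j) (s j))) • a g := by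
          refine Finset.sum_congr rfl fun g _ => ?_
          rw [Finset.sum_smul]
      _ = ∑ g ∈ a.support, (if g = g₀ then (1:ℤ) else 0) • a g := by
          refine Finset.sum_congr rfl fun g hg => ?_
          congr 1
          have e1 : ∀ s : Fin k → ℕ,
              (∏ j : Fin k, (lam j) (s j)) * (∏ j : Fin k, phi (g j) (s j))
                = ∏ j : Fin k, ((lam j) (s j) * phi (g j) (s j)) := fun s => by
            rw [Finset.prod_mul_distrib]
          rw [Finset.sum_congr rfl fun s _ => e1 s, hP]
          have hpu := Finset.prod_univ_sum (κ := fun _ : Fin k => ℕ)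
            (t := fun j => (lam j).support) (f := fun j x => (lam j) x * phi (g j) x)
          rw [← hpu]
          have e2 : ∀ j : Fin k,
              (∑ x ∈ (lam j).support, (lam j) x * phi (g j) x)
                = Lc (fun s => phi (g j) s) (lam j) := fun j => by
            rw [Lc_apply]; rfl
          rw [Finset.prod_congr rfl fun j _ => e2 j]
          have e3 : ∀ j : Fin k, Lc (fun s => phi (g j) s) (lam j)
              = if g j = g₀ j then 1 else 0 := fun j =>
            hlam j (g j) (Finset.mem_insert_of_mem (Finset.mem_image_of_mem _ hg))
          rw [Finset.prod_congr rfl fun j _ => e3 j]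
          by_cases hgg : g = g₀
          · subst hgg; simp
          · rw [if_neg hgg]
            have : ∃ j : Fin k, g j ≠ g₀ j := by
              by_contra hc
              push_neg at hc
              exact hgg (funext hc)
            obtain ⟨j, hj⟩ := this
            exact Finset.prod_eq_zero (Finset.mem_univ j) (if_neg hj)
      _ = a g₀ := by
          simp only [ite_smul, one_smul, zero_smul]
          rw [Finset.sum_ite_eq' a.support g₀ (fun g => a g)]
          by_cases hg₀ : g₀ ∈ a.support
          · rw [if_pos hg₀]
          · rw [if_neg hg₀, eq_comm]
            exact Finsupp.notMem_support_iff.mp hg₀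
  rw [T1] at T0
  simpa using T0

/-- Injectivity of the homomorphism `D` (the map `D'_{r-1}` with `k = r-1`
from the proof of Theorem 2.27, generalizing Lemma 2.23): for any abelian
group `A` and `k ≥ 1`, the map from `⨁_{(g) ∈ ℤᵏ} A` to `∏_{(s) ∈ ℕᵏ} A`
whose component at `(s)` is `Σ_{(g)} (∏ⱼ C(gⱼ+sⱼ-1, sⱼ)) • a_{(g)}`
is injective. -/
theorem D_injective (A : Type*) [AddCommGroup A] (k : ℕ) (hk : 1 ≤ k) :
    Function.Injective (fun (a : (Fin k → ℤ) →₀ A) (s : Fin k → ℕ) =>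
      a.sum fun g ag =>
        (∏ j : Fin k, Ring.choose (g j + (s j : ℤ) - 1) (s j)) • ag) := by
  intro a b hab
  have hsub : ∀ s : Fin k → ℕ,
      ((a - b).sum fun g ag => (∏ j : Fin k, phi (g j) (s j)) • ag) = 0 := by
    intro s
    have hs := congrFun hab s
    simp only at hs
    rw [Finsupp.sum_sub_index (fun g b₁ b₂ => smul_sub _ b₁ b₂)]
    have e : ∀ c : (Fin k → ℤ) →₀ A,
        (c.sum fun g ag => (∏ j : Fin k, phi (g j) (s j)) • ag)
          = c.sum fun g ag => (∏ j : Fin k, Ring.choose (g j + (s j : ℤ) - 1) (s j)) • ag :=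
      fun c => rfl
    rw [e a, e b, hs, sub_self]
  have := core A k (a - b) hsub
  exact sub_eq_zero.mp this
end
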